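/- (Regularised incomplete Beta tail bound) For all real a, b ≥ 1 and all x with 0 < x ≤ a/(a+b), the regularised incomplete Beta function satisfies I_x(a+1, b+1) ≤ x · [(a+b)^{3/2} / (1.6·√(ab))] · e^{−(a+b)·KL(θ̂‖x)}, where θ̂ := a/(a+b) and KL(p‖q) := p·ln(p/q) + (1−p)·ln((1−p)/(1−q)) is the binary KL-divergence. -/

import Mathlib

/-- The Beta function `B(a,b) = Γ(a)Γ(b)/Γ(a+b)`. -/
noncomputable def betaFn (a b : ℝ) : ℝ := Real.Gamma a * Real.Gamma b / Real.Gamma (a + b)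

/-- The regularised incomplete Beta function (cumulative Beta distribution)
`I_x(a,b) := B(x;a,b)/B(a,b)`, where `B(x;a,b) := ∫₀^x t^{a−1}(1−t)^{b−1} dt`. -/
noncomputable def regIncBeta (x a b : ℝ) : ℝ :=
  (∫ t in (0 : ℝ)..x, t ^ (a - 1) * (1 - t) ^ (b - 1)) / betaFn a b

/-- Binary KL-divergence `KL(p‖q) := p·ln(p/q) + (1−p)·ln((1−p)/(1−q))`. -/
noncomputable def klBin (p q : ℝ) : ℝ := p * Real.log (p / q) + (1 - p) * Real.log ((1 - p) / (1 - q))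

/-! On `[0, θ]`, `θ = a/(a+b)`, the integrand `t^a (1-t)^b` is increasing, so
`I_x(a+1, b+1) ≤ x · x^a (1-x)^b / B(a+1, b+1)`, and
`x^a (1-x)^b = θ^a (1-θ)^b e^{-(a+b) KL(θ‖x)}`. What remains is the lower bound
`1.6 √(ab) θ^a (1-θ)^b ≤ (a+b)^{3/2} B(a+1, b+1)`, which follows from Stirling's bounds
`0 ≤ log Γ(x) - ((x - 1/2) log x - x + log (2π) / 2) ≤ 1/(12x)` for real `x > 0`: from `x` to
`x + 1` the remainder decreases by a positive series dominated by `1/(12x) - 1/(12(x+1))`, and it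
tends to `0` along `x + n` by Stirling's formula for `n!` together with the log-convexity of `Γ`.
The constant `1.6` is what is left of `√(2π)` after absorbing `(a+b+1)/(a+b) ≤ 3/2` and
`e^{1/(12(a+b))}`. -/

open Real Filter Topology

theorem log_Gamma_add_one {x : ℝ} (hx : 0 < x) :
    log (Gamma (x + 1)) = log (Gamma x) + log x := by
  rw [Gamma_add_one hx.ne', log_mul hx.ne' (Gamma_pos_of_pos hx).ne', add_comm]

theorem tendsto_natCast_add_mul_log_one_add_div (c t : ℝ) :
    Tendsto (fun n : ℕ => (n + c) * log (1 + t / n)) atTop (𝓝 t) := by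
  have hmain : Tendsto (fun n : ℕ => (n : ℝ) * log (1 + t / n)) atTop (𝓝 t) :=
    (tendsto_mul_log_one_add_div_atTop t).comp tendsto_natCast_atTop_atTop
  have hlog : Tendsto (fun n : ℕ => log (1 + t / n)) atTop (𝓝 0) := by
    have h := ((tendsto_const_div_atTop_nhds_zero_nat t).const_add 1).log (by norm_num)
    rwa [add_zero, log_one] at h
  simpa [add_mul] using hmain.add (hlog.const_mul c)

theorem tendsto_log_Gamma_natCast_add_sub {y : ℝ} (hy0 : 0 < y) (hy1 : y ≤ 1) :
    Tendsto (fun n : ℕ => log (Gamma (n + y)) - log (Gamma n) - y * log n) atTop (𝓝 0) := by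
  have hfeq : ∀ {z : ℝ}, 0 < z → (log ∘ Gamma) (z + 1) = (log ∘ Gamma) z + log z :=
    fun hz => log_Gamma_add_one hz
  have hlow : Tendsto (fun n : ℕ => y * log (1 + -1 / n)) atTop (𝓝 0) := by
    have h := (((tendsto_const_div_atTop_nhds_zero_nat (-1)).const_add 1).log
      (by norm_num)).const_mul y
    rwa [add_zero, log_one, mul_zero] at h
  refine tendsto_of_tendsto_of_tendsto_of_le_of_le' hlow tendsto_const_nhds ?_ ?_
  · filter_upwards [eventually_ge_atTop 2] with n hn
    have h := BohrMollerup.f_add_nat_ge convexOn_log_Gamma hfeq hn hy0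
    have hn' : (2 : ℝ) ≤ n := by exact_mod_cast hn
    have hlog : log (1 + -1 / n) = log (n - 1) - log n := by
      rw [← log_div (by linarith) (by linarith)]
      congr 1
      field_simp
      ring
    simp only [Function.comp_apply] at h
    rw [hlog]
    linarith
  · filter_upwards [eventually_ne_atTop 0] with n hn
    have h := BohrMollerup.f_add_nat_le convexOn_log_Gamma hfeq hn hy0 hy1
    simp only [Function.comp_apply] at h
    linarith

noncomputable def stirlingRemainder (x : ℝ) : ℝ :=
  log (Gamma x) - ((x - 1 / 2) * log x - x + log (2 * π) / 2)

namespace stirlingRemainder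

variable {x : ℝ}

theorem sub_add_one (hx : 0 < x) :
    stirlingRemainder x - stirlingRemainder (x + 1) = (x + 1 / 2) * log (1 + x⁻¹) - 1 := by
  have hlog : log (1 + x⁻¹) = log (x + 1) - log x := by
    rw [← log_div (by positivity) hx.ne']
    congr 1
    field_simp
  simp only [stirlingRemainder, log_Gamma_add_one hx, hlog]
  ring

theorem hasSum_sub_add_one (hx : 0 < x) :
    HasSum (fun k : ℕ => ((1 / (2 * x + 1)) ^ 2) ^ (k + 1) / (2 * (k + 1) + 1))
      (stirlingRemainder x - stirlingRemainder (x + 1)) := by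
  have h := (hasSum_log_one_add_inv hx).mul_left (x + 1 / 2)
  rw [← hasSum_nat_add_iff' 1] at h
  set u := 1 / (2 * x + 1)
  have hu : u ≠ 0 := by positivity
  have hx' : x + 1 / 2 = 1 / (2 * u) := by simp only [u]; field_simp
  have hterm : ∀ k : ℕ,
      (x + 1 / 2) * (2 * (1 / (2 * ((k + 1 : ℕ) : ℝ) + 1)) * u ^ (2 * (k + 1) + 1))
      = (u ^ 2) ^ (k + 1) / (2 * (k + 1) + 1) := by
    intro k
    rw [hx']
    push_cast
    field_simp
    ring
  have hhead :
      ∑ i ∈ Finset.range 1, (x + 1 / 2) * (2 * (1 / (2 * (i : ℝ) + 1)) * u ^ (2 * i + 1))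
        = 1 := by
    rw [Finset.sum_range_one, hx']
    field_simp
    ring
  rw [sub_add_one hx]
  simpa only [hterm, hhead] using h

theorem add_one_le (hx : 0 < x) : stirlingRemainder (x + 1) ≤ stirlingRemainder x :=
  sub_nonneg.1 <| (hasSum_sub_add_one hx).nonneg fun k => by positivity

theorem sub_add_one_le (hx : 0 < x) :
    stirlingRemainder x - stirlingRemainder (x + 1) ≤ 1 / (12 * x) - 1 / (12 * (x + 1)) := by
  set u := 1 / (2 * x + 1)
  have hu0 : 0 < u := by positivity
  have hu1 : u ^ 2 < 1 := by
    have : u < 1 := by rw [div_lt_one] <;> linarith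
    nlinarith
  have hgeom := (hasSum_geometric_of_lt_one (by positivity) hu1).mul_left (u ^ 2 / 3)
  have hsum : u ^ 2 / 3 * (1 - u ^ 2)⁻¹ = 1 / (12 * x) - 1 / (12 * (x + 1)) := by
    rw [show 1 - u ^ 2 = 4 * x * (x + 1) * u ^ 2 by simp only [u]; field_simp; ring]
    field_simp
    ring
  rw [← hsum]
  refine hasSum_le (fun k => ?_) (hasSum_sub_add_one hx) hgeom
  rw [pow_succ', div_le_iff₀ (by positivity)]
  have : (0 : ℝ) ≤ u ^ 2 * (u ^ 2) ^ k := by positivity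
  nlinarith

theorem natCast {n : ℕ} (hn : n ≠ 0) :
    stirlingRemainder n = log (Stirling.stirlingSeq n) - log √π := by
  have hn0 : (0 : ℝ) < n := by positivity
  have hΓ : log (Gamma n) = log (n.factorial : ℝ) - log n := by
    rw [← Gamma_nat_eq_factorial, log_Gamma_add_one hn0, add_sub_cancel_right]
  rw [stirlingRemainder, hΓ, Stirling.log_stirlingSeq_formula, log_sqrt pi_pos.le,
    log_mul two_ne_zero hn0.ne', log_mul two_ne_zero pi_pos.ne', log_div hn0.ne' (exp_pos 1).ne',
    log_exp]
  ring

theorem tendsto_natCast : Tendsto (fun n : ℕ => stirlingRemainder n) atTop (𝓝 0) := by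
  have h := ((continuousAt_log (by positivity)).tendsto.comp
    Stirling.tendsto_stirlingSeq_sqrt_pi).sub_const (log √π)
  rw [sub_self] at h
  refine h.congr' ?_
  filter_upwards [eventually_ne_atTop 0] with n hn
  exact (natCast hn).symm

theorem tendsto_natCast_add_sub_natCast {y : ℝ} (hy0 : 0 < y) (hy1 : y ≤ 1) :
    Tendsto (fun n : ℕ => stirlingRemainder (n + y) - stirlingRemainder n) atTop (𝓝 0) := by
  have h := (tendsto_log_Gamma_natCast_add_sub hy0 hy1).sub
    ((tendsto_natCast_add_mul_log_one_add_div (y - 1 / 2) y).sub_const y)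
  rw [sub_self, sub_zero] at h
  refine h.congr' ?_
  filter_upwards [eventually_ne_atTop 0] with n hn
  have hn0 : (0 : ℝ) < n := by positivity
  have hlog : log (1 + y / n) = log (n + y) - log n := by
    rw [← log_div (by positivity) hn0.ne']
    congr 1
    field_simp
  simp only [stirlingRemainder, hlog]
  ring

theorem tendsto_add_natCast (hx : 0 < x) :
    Tendsto (fun n : ℕ => stirlingRemainder (x + n)) atTop (𝓝 0) := by
  obtain ⟨k, hkx, hxk⟩ : ∃ k : ℕ, (k : ℝ) < x ∧ x ≤ k + 1 := by
    rcases le_or_gt x 1 with h | h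
    · exact ⟨0, by simpa using hx, by simpa using h⟩
    · exact ⟨⌈x - 1⌉₊, by linarith [Nat.ceil_lt_add_one (by linarith : 0 ≤ x - 1)],
        by linarith [Nat.le_ceil (x - 1)]⟩
  have h := ((tendsto_natCast_add_sub_natCast (sub_pos.2 hkx) (by linarith)).add
    tendsto_natCast).comp (tendsto_add_atTop_nat k)
  rw [zero_add] at h
  refine h.congr fun n => ?_
  simp only [Function.comp_apply, Nat.cast_add, sub_add_cancel]
  congr 1
  ring

theorem nonneg (hx : 0 < x) : 0 ≤ stirlingRemainder x := by
  have hanti : Antitone fun n : ℕ => stirlingRemainder (x + n) :=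
    antitone_nat_of_succ_le fun n => by
      simpa only [Nat.cast_succ, add_assoc] using add_one_le (x := x + n) (by positivity)
  simpa using hanti.le_of_tendsto (tendsto_add_natCast hx) 0

theorem le_one_div (hx : 0 < x) : stirlingRemainder x ≤ 1 / (12 * x) := by
  have hmono : Monotone fun n : ℕ => stirlingRemainder (x + n) - 1 / (12 * (x + n)) :=
    monotone_nat_of_le_succ fun n => by
      have h := sub_add_one_le (x := x + n) (by positivity)
      simp only [Nat.cast_succ, ← add_assoc]
      linarith
  have hinv : Tendsto (fun n : ℕ => 1 / (12 * (x + n))) atTop (𝓝 0) :=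
    tendsto_const_nhds.div_atTop <| (tendsto_atTop_add_const_left _ x
      tendsto_natCast_atTop_atTop).const_mul_atTop (by norm_num)
  have h := hmono.ge_of_tendsto (by simpa using (tendsto_add_natCast hx).sub hinv) 0
  simp only [Nat.cast_zero, add_zero] at h
  linarith

end stirlingRemainder

theorem one_six_mul_add_one_mul_exp_le_sqrt_two_pi_mul {s : ℝ} (hs : 2 ≤ s) :
    1.6 * (s + 1) * exp (1 / (12 * s)) ≤ √(2 * π) * s := by
  have hexp : exp (1 / (12 * s)) ≤ 12 * s / (12 * s - 1) := by
    have h := exp_bound_div_one_sub_of_interval' (x := 1 / (12 * s)) (by positivity)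
      (by rw [div_lt_one] <;> linarith)
    rw [one_sub_div (by positivity), one_div_div] at h
    exact h.le
  have hsqrt : 2.505 ≤ √(2 * π) := by
    rw [le_sqrt (by norm_num) (by positivity)]
    nlinarith [pi_gt_d2]
  calc 1.6 * (s + 1) * exp (1 / (12 * s)) ≤ 1.6 * (s + 1) * (12 * s / (12 * s - 1)) := by
        gcongr
    _ ≤ 2.505 * s := by
        rw [mul_div_assoc', div_le_iff₀ (by linarith)]
        nlinarith
    _ ≤ √(2 * π) * s := by gcongr

theorem betaFn_pos {a b : ℝ} (ha : 0 < a) (hb : 0 < b) : 0 < betaFn a b := by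
  unfold betaFn
  positivity

theorem mul_sqrt_mul_rpow_mul_rpow_le_rpow_mul_betaFn {a b : ℝ} (ha : 0 < a) (hb : 0 < b)
    (hab : 2 ≤ a + b) :
    1.6 * √(a * b) * ((a / (a + b)) ^ a * (b / (a + b)) ^ b) ≤
      (a + b) ^ ((3 : ℝ) / 2) * betaFn (a + 1) (b + 1) := by
  have hs : 0 < a + b := by positivity
  have hB := betaFn_pos (by linarith : 0 < a + 1) (by linarith : 0 < b + 1)
  have hΓa := stirlingRemainder.nonneg ha
  have hΓb := stirlingRemainder.nonneg hb
  have hΓs := stirlingRemainder.le_one_div hs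
  have hnum := log_le_log (by positivity) (one_six_mul_add_one_mul_exp_le_sqrt_two_pi_mul hab)
  have hlogB : log (betaFn (a + 1) (b + 1)) = log (Gamma a) + log a + log (Gamma b) + log b -
      (log (Gamma (a + b)) + log (a + b) + log (a + b + 1)) := by
    rw [betaFn, show a + 1 + (b + 1) = a + b + 1 + 1 by ring,
      log_div (by positivity) (by positivity), log_mul (by positivity) (by positivity),
      log_Gamma_add_one ha, log_Gamma_add_one hb,
      log_Gamma_add_one (by positivity), log_Gamma_add_one hs]
    ring
  unfold stirlingRemainder at hΓa hΓb hΓs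
  rw [← log_le_log_iff (by positivity) (by positivity)]
  simp (disch := positivity) only [log_mul, log_div, log_rpow, log_sqrt, log_exp]
    at hnum hΓa hΓb hΓs ⊢
  rw [hlogB]
  linarith

theorem monotoneOn_rpow_mul_one_sub_rpow {a b : ℝ} (ha : 0 < a) (hb : 0 < b) :
    MonotoneOn (fun t : ℝ => t ^ a * (1 - t) ^ b) (Set.Icc 0 (a / (a + b))) := by
  rintro s ⟨hs0, -⟩ t ⟨-, htθ⟩ hst
  have hbt : b * t ≤ a * (1 - t) := by
    rw [le_div_iff₀ (by positivity)] at htθ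
    linarith
  have ht1 : 0 < 1 - t := by nlinarith
  rcases hs0.eq_or_lt with rfl | hs0
  · simp only [zero_rpow ha.ne', zero_mul]
    positivity
  have ht0 : 0 < t := hs0.trans_le hst
  have hs1 : 0 < 1 - s := by linarith
  have h1 := log_le_sub_one_of_pos (div_pos hs0 ht0)
  have h2 := log_le_sub_one_of_pos (div_pos hs1 ht1)
  have hslope : a * (s / t - 1) + b * ((1 - s) / (1 - t) - 1) ≤ 0 := by
    rw [show a * (s / t - 1) + b * ((1 - s) / (1 - t) - 1) =
      (t - s) * (b * t - a * (1 - t)) / (t * (1 - t)) by field_simp; ring]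
    exact div_nonpos_of_nonpos_of_nonneg
      (mul_nonpos_of_nonneg_of_nonpos (by linarith) (by linarith)) (by positivity)
  rw [log_div hs0.ne' ht0.ne'] at h1
  rw [log_div hs1.ne' ht1.ne'] at h2
  simp only [rpow_def_of_pos hs0, rpow_def_of_pos hs1, rpow_def_of_pos ht0,
    rpow_def_of_pos ht1, ← exp_add]
  exact exp_le_exp.2 (by nlinarith)

theorem integral_rpow_mul_one_sub_rpow_le {a b x : ℝ} (ha : 0 < a) (hb : 0 < b) (hx0 : 0 ≤ x)
    (hx : x ≤ a / (a + b)) :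
    ∫ t in (0 : ℝ)..x, t ^ a * (1 - t) ^ b ≤ x * (x ^ a * (1 - x) ^ b) := by
  have hmono := (monotoneOn_rpow_mul_one_sub_rpow ha hb).mono (Set.Icc_subset_Icc_right hx)
  have hint : IntervalIntegrable (fun t : ℝ => t ^ a * (1 - t) ^ b) MeasureTheory.volume 0 x := by
    apply MonotoneOn.intervalIntegrable
    rwa [Set.uIcc_of_le hx0]
  calc ∫ t in (0 : ℝ)..x, t ^ a * (1 - t) ^ b ≤ ∫ _ in (0 : ℝ)..x, x ^ a * (1 - x) ^ b :=
        intervalIntegral.integral_mono_on hx0 hint intervalIntegrable_const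
          fun t ht => hmono ht ⟨hx0, le_rfl⟩ ht.2
    _ = x * (x ^ a * (1 - x) ^ b) := by
        rw [intervalIntegral.integral_const, smul_eq_mul, sub_zero]

theorem regIncBeta_add_one_le {a b x : ℝ} (ha : 0 < a) (hb : 0 < b) (hx0 : 0 ≤ x)
    (hx : x ≤ a / (a + b)) :
    regIncBeta x (a + 1) (b + 1) ≤ x * (x ^ a * (1 - x) ^ b) / betaFn (a + 1) (b + 1) := by
  have hB := betaFn_pos (by linarith : 0 < a + 1) (by linarith : 0 < b + 1)
  rw [regIncBeta]
  simp only [add_sub_cancel_right]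
  gcongr
  exact integral_rpow_mul_one_sub_rpow_le ha hb hx0 hx

theorem exp_neg_mul_klBin {a b x : ℝ} (ha : 0 < a) (hb : 0 < b) (hx0 : 0 < x) (hx1 : x < 1) :
    exp (-(a + b) * klBin (a / (a + b)) x) =
      x ^ a * (1 - x) ^ b / ((a / (a + b)) ^ a * (b / (a + b)) ^ b) := by
  have h1 : 1 - a / (a + b) = b / (a + b) := by field_simp; ring
  rw [klBin, h1, rpow_def_of_pos hx0, rpow_def_of_pos (sub_pos.2 hx1),
    rpow_def_of_pos (by positivity : 0 < a / (a + b)),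
    rpow_def_of_pos (by positivity : 0 < b / (a + b)), ← exp_add, ← exp_add, ← exp_sub]
  congr 1
  rw [log_div (by positivity) hx0.ne', log_div (by positivity) (sub_pos.2 hx1).ne']
  field_simp
  ring

/-- **Regularised incomplete Beta tail bound.** For all real `a, b ≥ 1` and `0 < x ≤ a/(a+b)`,
`I_x(a+1, b+1) ≤ x·[(a+b)^{3/2}/(1.6·√(ab))]·e^{−(a+b)·KL(θ̂‖x)}`, where `θ̂ := a/(a+b)`. -/
theorem reg_inc_beta_tail_bound (a b : ℝ) (ha : 1 ≤ a) (hb : 1 ≤ b)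
    (x : ℝ) (hx0 : 0 < x) (hx : x ≤ a / (a + b)) :
    regIncBeta x (a + 1) (b + 1) ≤
      x * ((a + b) ^ ((3 : ℝ) / 2) / (1.6 * Real.sqrt (a * b))) *
        Real.exp (-(a + b) * klBin (a / (a + b)) x) := by
  have ha0 : 0 < a := by linarith
  have hb0 : 0 < b := by linarith
  have hx1 : x < 1 := hx.trans_lt <| (div_lt_one (by linarith)).2 (by linarith)
  have hB := betaFn_pos (by linarith : 0 < a + 1) (by linarith : 0 < b + 1)
  have hbeta := mul_sqrt_mul_rpow_mul_rpow_le_rpow_mul_betaFn ha0 hb0 (by linarith)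
  rw [exp_neg_mul_klBin ha0 hb0 hx0 hx1]
  refine (regIncBeta_add_one_le ha0 hb0 hx0.le hx).trans ?_
  set P := x ^ a * (1 - x) ^ b
  set Q := (a / (a + b)) ^ a * (b / (a + b)) ^ b
  set S := (a + b) ^ ((3 : ℝ) / 2)
  have hQ : 0 < Q := by positivity
  rw [div_le_iff₀ hB]
  calc x * P = x * P / (1.6 * √(a * b) * Q) * (1.6 * √(a * b) * Q) := by field_simp
    _ ≤ x * P / (1.6 * √(a * b) * Q) * (S * betaFn (a + 1) (b + 1)) := by gcongr
    _ = x * (S / (1.6 * √(a * b))) * (P / Q) * betaFn (a + 1) (b + 1) := by field_simp
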